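/- arXiv:2002.08738 — 5 statements merged into one kernel-verified Lean document; each statement's English description precedes it below -/
import Mathlib

section
/- Let (τ_i)_{i∈ℕ} be a sequence of trees labelled by judgments c ⇒ u over a big-step semantics (C, R, 𝓡), with u ∈ R ∪ {?}, which is increasing with respect to the order ⊑ (i.e. τ_n ⊑ τ_{n+1} for all n). Then the sequence has a least upper bound τ = ⊔ τ_n with respect to ⊑. -/
namespace BigStepMeta

universe u

/-- A judgment `c ⇒ r`: a configuration together with a result. -/
structure Judg (C : Type u) where
  conf : C
  res  : C

/-- A big-step rule: a conclusion configuration plus a nonempty finite list of premises.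
The last premise is the continuation; the conclusion judgment is `concl ⇒ (last premise).res`. -/
structure Rule (C : Type u) where
  concl : C
  premises : List (Judg C)
  ne : premises ≠ []

/-- The last premise (continuation) of a rule. -/
def Rule.lastJ {C : Type u} (ρ : Rule C) : Judg C := ρ.premises.getLast ρ.ne

/-- A big-step semantics `(C, R, 𝓡)`: configurations `C`, results `R ⊆ C`, rules `𝓡`. -/
structure BigStep (C : Type u) where
  R : Set C
  Rules : Set (Rule C)
  concl_not_res : ∀ ρ ∈ Rules, ρ.concl ∉ R
  prem_res : ∀ ρ ∈ Rules, ∀ j ∈ ρ.premises, j.res ∈ R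

variable {C : Type u}

/-- Condition BP: the number of premises of rules is bounded. -/
def BigStep.BP (S : BigStep C) : Prop :=
  ∃ b : ℕ, ∀ ρ ∈ S.Rules, ρ.premises.length ≤ b

/-- Inductive derivability `⊢_𝓡 c ⇒ r`: there is a finite proof tree.
For each result `r ∈ R` there is an implicit axiom `r ⇒ r`. -/
inductive Derives (S : BigStep C) : C → C → Prop
  | ax {r : C} : r ∈ S.R → Derives S r r
  | rule {ρ : Rule C} : ρ ∈ S.Rules →
      (∀ j ∈ ρ.premises, Derives S j.conf j.res) →
      Derives S ρ.concl ρ.lastJ.res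

/-! ## Traces -/

/-- A finite or infinite trace of configurations. -/
inductive Trace (C : Type u) where
  | fin : List C → Trace C
  | inf : (ℕ → C) → Trace C

/-- Concatenation of a finite list with an infinite sequence. -/
def appendInf (l : List C) (f : ℕ → C) : ℕ → C :=
  fun n => if h : n < l.length then l.get ⟨n, h⟩ else f (n - l.length)

/-- The finite trace `t_k · R(j_k)` associated to a premise and a chosen finite trace. -/
def finPart (p : Judg C × List C) : List C := p.2 ++ [p.1.res]

/-- The rule instances of the trace semantics `𝓡^tr`: a conclusion `c ⇒ t`
together with its list of premises. -/
inductive TrRule (S : BigStep C) : C → Trace C → List (C × Trace C) → Prop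
  | ax {r : C} : r ∈ S.R → TrRule S r (.fin [r]) []
  | intro {ρ : Rule C} {ts : List (List C)} :
      ρ ∈ S.Rules → ts.length = ρ.premises.length →
      TrRule S ρ.concl
        (.fin (ρ.concl :: ((ρ.premises.zip ts).map finPart).flatten))
        ((ρ.premises.zip ts).map (fun p => (p.1.conf, Trace.fin (finPart p))))
  | div {ρ : Rule C} {pre rest : List (Judg C)} {j : Judg C} {ts : List (List C)} {f : ℕ → C} :
      ρ ∈ S.Rules → ρ.premises = pre ++ j :: rest →
      ts.length = pre.length →
      TrRule S ρ.concl
        (.inf (appendInf (ρ.concl :: ((pre.zip ts).map finPart).flatten) f))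
        (((pre.zip ts).map (fun p => (p.1.conf, Trace.fin (finPart p)))) ++
          [(j.conf, Trace.inf f)])

/-- `⊢_{𝓡^tr} c ⇒ t` by a finite derivation (inductive interpretation of `𝓡^tr`). -/
inductive TrDerivesFin (S : BigStep C) : C → Trace C → Prop
  | step {c : C} {t : Trace C} {prems : List (C × Trace C)} :
      TrRule S c t prems →
      (∀ p ∈ prems, TrDerivesFin S p.1 p.2) →
      TrDerivesFin S c t

/-- `⊢_{𝓡^tr} c ⇒ t`: coinductive interpretation of `𝓡^tr`, i.e. existence of a possibly
infinite proof tree, expressed as membership in some backward-closed (consistent) relation. -/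
def TrDerives (S : BigStep C) (c : C) (t : Trace C) : Prop :=
  ∃ X : C → Trace C → Prop,
    (∀ c' t', X c' t' → ∃ prems, TrRule S c' t' prems ∧ ∀ p ∈ prems, X p.1 p.2) ∧
    X c t

/-! ## Wrong -/

/-- There is a rule with conclusion configuration `c`, first premises `pre`, whose next
premise has configuration `c'` and result `r` (i.e. a rule `ρ' ∼ᵢ ρ` with `R(ρ', i) = r`). -/
def HasContinuation (S : BigStep C) (c : C) (pre : List (Judg C)) (c' r : C) : Prop :=
  ∃ ρ' ∈ S.Rules, ∃ j' : Judg C, ∃ rest' : List (Judg C),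
    ρ'.premises = pre ++ j' :: rest' ∧ ρ'.concl = c ∧ j'.conf = c' ∧ j'.res = r

/-- Derivability in the wrong semantics `𝓡^wr`; `none` plays the role of `wrong`. -/
inductive DerivesW (S : BigStep C) : C → Option C → Prop
  | ax {r : C} : r ∈ S.R → DerivesW S r (some r)
  | rule {ρ : Rule C} : ρ ∈ S.Rules →
      (∀ j ∈ ρ.premises, DerivesW S j.conf (some j.res)) →
      DerivesW S ρ.concl (some ρ.lastJ.res)
  | wrong_intro {ρ : Rule C} {pre rest : List (Judg C)} {j : Judg C} {r : C} :
      ρ ∈ S.Rules → ρ.premises = pre ++ j :: rest → r ∈ S.R →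
      ¬ HasContinuation S ρ.concl pre j.conf r →
      (∀ j' ∈ pre, DerivesW S j'.conf (some j'.res)) →
      DerivesW S j.conf (some r) →
      DerivesW S ρ.concl none
  | wrong_ax {c : C} : c ∉ S.R → (¬ ∃ ρ ∈ S.Rules, ρ.concl = c) →
      DerivesW S c none
  | wrong_prop {ρ : Rule C} {pre rest : List (Judg C)} {j : Judg C} :
      ρ ∈ S.Rules → ρ.premises = pre ++ j :: rest →
      (∀ j' ∈ pre, DerivesW S j'.conf (some j'.res)) →
      DerivesW S j.conf none →
      DerivesW S ρ.concl none

/-! ## Indexed predicates and soundness conditions -/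

variable {I : Type u}

/-- `c ∈ Π`, i.e. `c ∈ Π_ι` for some index `ι`. -/
def InPred (P : I → Set C) (c : C) : Prop := ∃ i : I, c ∈ P i

/-- Condition S1 (local preservation). -/
def LocalPres (S : BigStep C) (P : I → Set C) : Prop :=
  ∀ ρ ∈ S.Rules, ∀ i : I, ρ.concl ∈ P i →
    ∃ f : ℕ → I, f (ρ.premises.length - 1) = i ∧
      ∀ (k : ℕ) (hk : k < ρ.premises.length),
        (∀ (h : ℕ) (hh : h < k), (ρ.premises.get ⟨h, hh.trans hk⟩).res ∈ P (f h)) →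
        (ρ.premises.get ⟨k, hk⟩).conf ∈ P (f k)

/-- Condition S2 (∃-progress). -/
def ExProgress (S : BigStep C) (P : I → Set C) : Prop :=
  ∀ c : C, InPred P c → c ∉ S.R → ∃ ρ ∈ S.Rules, ρ.concl = c

/-- Condition S3 (∀-progress). -/
def AllProgress (S : BigStep C) (P : I → Set C) : Prop :=
  ∀ ρ ∈ S.Rules, InPred P ρ.concl →
    ∀ (pre : List (Judg C)) (j : Judg C) (rest : List (Judg C)),
      ρ.premises = pre ++ j :: rest →
      (∀ j' ∈ pre, Derives S j'.conf j'.res) →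
      ∀ r ∈ S.R, Derives S j.conf r →
      HasContinuation S ρ.concl pre j.conf r

/-- Condition S4 (progress-may). -/
def ProgressMay (S : BigStep C) (P : I → Set C) : Prop :=
  ∀ c : C, InPred P c → c ∉ S.R →
    ∃ ρ ∈ S.Rules, ρ.concl = c ∧
      ∀ (pre : List (Judg C)) (j : Judg C) (rest : List (Judg C)),
        ρ.premises = pre ++ j :: rest →
        (∀ j' ∈ pre, Derives S j'.conf j'.res) →
        ¬ Derives S j.conf j.res →
        ¬ ∃ r : C, Derives S j.conf r

/-! ## Partial evaluation: the inference system `𝓡^?` -/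

/-- The rule instances of the partial-evaluation semantics `𝓡^?`; `none` plays the role
of the unknown result `?`. -/
inductive URule (S : BigStep C) : C → Option C → List (C × Option C) → Prop
  | ax {r : C} : r ∈ S.R → URule S r (some r) []
  | rule {ρ : Rule C} : ρ ∈ S.Rules →
      URule S ρ.concl (some ρ.lastJ.res) (ρ.premises.map (fun j => (j.conf, some j.res)))
  | unk_ax {c : C} : URule S c none []
  | unk {ρ : Rule C} {pre rest : List (Judg C)} {j : Judg C} {r : C} :
      ρ ∈ S.Rules → ρ.premises = pre ++ j :: rest → r ∈ S.R →
      URule S ρ.concl none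
        (pre.map (fun j' => (j'.conf, some j'.res)) ++ [(j.conf, some r)])
  | prop {ρ : Rule C} {pre rest : List (Judg C)} {j : Judg C} :
      ρ ∈ S.Rules → ρ.premises = pre ++ j :: rest →
      URule S ρ.concl none
        (pre.map (fun j' => (j'.conf, some j'.res)) ++ [(j.conf, none)])

/-! ## Possibly infinite trees as partial functions -/

/-- A (possibly infinite) tree labelled by judgments `c ⇒ u`, `u ∈ R ∪ {?}`, given as a
partial function on addresses (lists of positive naturals), with nonempty domain closed
under parents and left siblings. -/
structure PTree (C : Type u) where
  label : List ℕ+ → Option (C × Option C)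
  root_def : label [] ≠ none
  closed : ∀ (α : List ℕ+) (n : ℕ+), label (α ++ [n]) ≠ none → label α ≠ none
  siblings : ∀ (α : List ℕ+) (n k : ℕ+), k ≤ n →
    label (α ++ [n]) ≠ none → label (α ++ [k]) ≠ none

/-- `τ` is a proof tree in `𝓡^?`: at each node, the children are exactly the premises
of a rule of `𝓡^?` with the node's judgment as conclusion. -/
def PTree.IsProofTree (S : BigStep C) (τ : PTree C) : Prop :=
  ∀ (α : List ℕ+) (p : C × Option C), τ.label α = some p →
    ∃ prems : List (C × Option C), URule S p.1 p.2 prems ∧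
      ∀ n : ℕ+, τ.label (α ++ [n]) = prems[(n : ℕ) - 1]?

/-- The order `τ ⊑ τ'` on trees: larger domain, same configurations, and equal subtrees
at nodes whose result is already known (in `R`). -/
def PTree.LE (τ τ' : PTree C) : Prop :=
  ∀ (α : List ℕ+) (p : C × Option C), τ.label α = some p →
    ∃ p' : C × Option C, τ'.label α = some p' ∧ p.1 = p'.1 ∧
      (p.2 ≠ none → ∀ β : List ℕ+, τ.label (α ++ β) = τ'.label (α ++ β))

/-- A tree is finite if its domain is finite. -/
def PTree.Finite (τ : PTree C) : Prop := {α : List ℕ+ | τ.label α ≠ none}.Finite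

/-- A (typically infinite) proof tree is well-formed if at every level there is a node
labelled by an incomplete judgment, and subtrees rooted at complete judgments are finite. -/
def PTree.WellFormed (τ : PTree C) : Prop :=
  (∀ n : ℕ, ∃ (α : List ℕ+) (c : C), α.length = n ∧ τ.label α = some (c, none)) ∧
  (∀ (α : List ℕ+) (c r : C), τ.label α = some (c, some r) →
    {β : List ℕ+ | τ.label (α ++ β) ≠ none}.Finite)

/-! ## Finite proof trees and the reduction relation -/

/-- Finite trees labelled by judgments `c ⇒ u`, `u ∈ R ∪ {?}` (with `none` playing `?`). -/
inductive FTree (C : Type u) where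
  | node : C → Option C → List (FTree C) → FTree C

/-- The judgment at the root of a finite tree. -/
def FTree.judg : FTree C → C × Option C
  | .node c u _ => (c, u)

/-- `τ` is a finite proof tree in the partial-evaluation semantics `𝓡^?`. -/
inductive IsFPT (S : BigStep C) : FTree C → Prop
  | mk {c : C} {u : Option C} {l : List (FTree C)} :
      URule S c u (l.map FTree.judg) →
      (∀ τ ∈ l, IsFPT S τ) →
      IsFPT S (.node c u l)

/-- A finite proof tree is complete if all its judgments have results in `R`. -/
inductive FTree.Complete (S : BigStep C) : FTree C → Prop
  | mk {c : C} {r : C} {l : List (FTree C)} :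
      r ∈ S.R →
      (∀ τ ∈ l, FTree.Complete S τ) →
      FTree.Complete S (.node c (some r) l)

/-- The order `τ ⊑ τ'` on finite trees. -/
inductive FTreeLE : FTree C → FTree C → Prop
  | done {c r : C} {l : List (FTree C)} :
      FTreeLE (.node c (some r) l) (.node c (some r) l)
  | step {c : C} {u' : Option C} {l l₁ l₂ : List (FTree C)} :
      l.length = l₁.length →
      (∀ p ∈ l.zip l₁, FTreeLE p.1 p.2) →
      FTreeLE (.node c none l) (.node c u' (l₁ ++ l₂))

/-- The one-step reduction relation `⇝` on finite proof trees in `𝓡^?`. -/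
inductive Red (S : BigStep C) : FTree C → FTree C → Prop
  /-- The axiom `r ⇒ ?` (with `r ∈ R`) steps to the axiom `r ⇒ r`. -/
  | res {r : C} : r ∈ S.R → Red S (.node r none []) (.node r (some r) [])
  /-- The axiom `c ⇒ ?` steps, for a rule `ρ` with conclusion configuration `c`,
  to the tree applying `prop(ρ,1,?)` to the leaf `c' ⇒ ?`, `c'` the first premise
  configuration of `ρ`. -/
  | start {ρ : Rule C} {j : Judg C} {rest : List (Judg C)} :
      ρ ∈ S.Rules → ρ.premises = j :: rest →
      Red S (.node ρ.concl none []) (.node ρ.concl none [.node j.conf none []])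
  /-- A tree with root `c ⇒ ?` whose children are the first `i` premises of some
  `ρ' ∈ 𝓡` (with `#ρ' = i`, last premise result `r`) steps to the same tree with
  root `c ⇒ r`. -/
  | complete {ρ' : Rule C} {pre : List (Judg C)} {j' : Judg C} {l : List (FTree C)} :
      ρ' ∈ S.Rules → ρ'.premises = pre ++ [j'] →
      l.map FTree.judg = pre.map (fun j => (j.conf, some j.res)) ++ [(j'.conf, some j'.res)] →
      Red S (.node ρ'.concl none l) (.node ρ'.concl (some j'.res) l)
  /-- A tree with root `c ⇒ ?` whose children are the first `i` premises of some
  `ρ' ∈ 𝓡` having an `(i+1)`-th premise steps by adding the leaf for that premise's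
  configuration. -/
  | next {ρ' : Rule C} {pre rest : List (Judg C)} {j' j'' : Judg C} {l : List (FTree C)} :
      ρ' ∈ S.Rules → ρ'.premises = pre ++ j' :: j'' :: rest →
      l.map FTree.judg = pre.map (fun j => (j.conf, some j.res)) ++ [(j'.conf, some j'.res)] →
      Red S (.node ρ'.concl none l) (.node ρ'.concl none (l ++ [.node j''.conf none []]))
  /-- Propagation: a step of the last child is propagated. -/
  | inner {c : C} {l : List (FTree C)} {τ τ' : FTree C} :
      Red S τ τ' →
      Red S (.node c none (l ++ [τ])) (.node c none (l ++ [τ']))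

/-! At every address the labels of an increasing sequence of trees stabilise: once a node
exists its configuration is fixed, and once its result is known the label (indeed the whole
subtree below it) is frozen. The supremum labels each address by its eventual label; it is an
upper bound because a known result freezes the subtree from some index on, and it is below
every upper bound because each of its labels, together with the relevant subtree labels, is
already attained by a single tree of the sequence. -/

namespace PTree

open Filter

variable {C : Type u}

instance : Preorder (PTree C) where
  le := PTree.LE
  le_refl _ _ p hp := ⟨p, hp, rfl, fun _ _ => rfl⟩
  le_trans τ₁ τ₂ τ₃ h₁₂ h₂₃ α p hp := by
    obtain ⟨p', hp', hconf, hsub⟩ := h₁₂ α p hp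
    obtain ⟨p'', hp'', hconf', hsub'⟩ := h₂₃ α p' hp'
    refine ⟨p'', hp'', hconf.trans hconf', fun hres β => ?_⟩
    have hpp' : p = p' := Option.some_inj.mp <| by simpa [hp, hp'] using hsub hres []
    rw [hsub hres β, hsub' (hpp' ▸ hres) β]

theorem LE.label_append_eq {τ τ' : PTree C} (h : τ ≤ τ') {α : List ℕ+} {p : C × Option C}
    (hα : τ.label α = some p) (hres : p.2 ≠ none) (β : List ℕ+) :
    τ.label (α ++ β) = τ'.label (α ++ β) := by
  obtain ⟨_, _, _, hsub⟩ := h α p hα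
  exact hsub hres β

theorem LE.label_eq {τ τ' : PTree C} (h : τ ≤ τ') {α : List ℕ+} {p : C × Option C}
    (hα : τ.label α = some p) (hres : p.2 ≠ none) : τ.label α = τ'.label α := by
  simpa using h.label_append_eq hα hres []

variable {τs : ℕ → PTree C}

theorem exists_eventually_label_eq (hτ : Monotone τs) (α : List ℕ+) :
    ∃ v, ∀ᶠ n in atTop, (τs n).label α = v := by
  by_cases hdef : ∃ n p, (τs n).label α = some p
  swap
  · push Not at hdef
    exact ⟨none, .of_forall fun n => Option.eq_none_iff_forall_ne_some.2 (hdef n)⟩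
  obtain ⟨n, p, hp⟩ := hdef
  by_cases hknown : ∃ m q, (τs m).label α = some q ∧ q.2 ≠ none
  · obtain ⟨m, q, hq, hres⟩ := hknown
    exact ⟨some q, eventually_atTop.2 ⟨m, fun k hk => hq ▸ ((hτ hk).label_eq hq hres).symm⟩⟩
  · push Not at hknown
    refine ⟨some p, eventually_atTop.2 ⟨n, fun k hk => ?_⟩⟩
    obtain ⟨p', hp', hconf, -⟩ := hτ hk α p hp
    rw [hp', Prod.ext hconf.symm (by rw [hknown k p' hp', hknown n p hp])]

open Classical in
/-- Junk value `none` where the labels at `α` never stabilise, which cannot happen for a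
monotone sequence. -/
noncomputable def limLabel (τs : ℕ → PTree C) (α : List ℕ+) : Option (C × Option C) :=
  if h : ∃ v, ∀ᶠ n in atTop, (τs n).label α = v then h.choose else none

theorem eventually_label_eq_limLabel (hτ : Monotone τs) (α : List ℕ+) :
    ∀ᶠ n in atTop, (τs n).label α = limLabel τs α := by
  have h := exists_eventually_label_eq hτ α
  simpa only [limLabel, dif_pos h] using h.choose_spec

theorem exists_label_eq_limLabel₂ (hτ : Monotone τs) (α β : List ℕ+) (n : ℕ) :
    ∃ m ≥ n, (τs m).label α = limLabel τs α ∧ (τs m).label β = limLabel τs β := by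
  obtain ⟨m, hα, hβ, hm⟩ := ((eventually_label_eq_limLabel hτ α).and
    ((eventually_label_eq_limLabel hτ β).and (eventually_ge_atTop n))).exists
  exact ⟨m, hm, hα, hβ⟩

noncomputable def lim (hτ : Monotone τs) : PTree C where
  label := limLabel τs
  root_def := by
    obtain ⟨m, -, hm, -⟩ := exists_label_eq_limLabel₂ hτ [] [] 0
    exact hm ▸ (τs m).root_def
  closed α n h := by
    obtain ⟨m, -, hα, hαn⟩ := exists_label_eq_limLabel₂ hτ α (α ++ [n]) 0
    exact hα ▸ (τs m).closed α n (hαn ▸ h)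
  siblings α n k hkn h := by
    obtain ⟨m, -, hαk, hαn⟩ := exists_label_eq_limLabel₂ hτ (α ++ [k]) (α ++ [n]) 0
    exact hαk ▸ (τs m).siblings α n k hkn (hαn ▸ h)

theorem le_lim (hτ : Monotone τs) (n : ℕ) : τs n ≤ lim hτ := by
  intro α p hp
  obtain ⟨m, hnm, hm, -⟩ := exists_label_eq_limLabel₂ hτ α α n
  obtain ⟨p', hp', hconf, -⟩ := hτ hnm α p hp
  refine ⟨p', hm.symm.trans hp', hconf, fun hres β => ?_⟩
  obtain ⟨k, hnk, -, hk⟩ := exists_label_eq_limLabel₂ hτ α (α ++ β) n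
  exact ((hτ hnk).label_append_eq hp hres β).trans hk

theorem lim_le (hτ : Monotone τs) {τ : PTree C} (hτs : ∀ n, τs n ≤ τ) : lim hτ ≤ τ := by
  intro α q hq
  obtain ⟨m, -, hm, -⟩ := exists_label_eq_limLabel₂ hτ α α 0
  obtain ⟨q', hq', hconf, -⟩ := hτs m α q (hm.trans hq)
  refine ⟨q', hq', hconf, fun hres β => ?_⟩
  obtain ⟨k, -, hk, hkβ⟩ := exists_label_eq_limLabel₂ hτ α (α ++ β) 0
  exact hkβ.symm.trans ((hτs k).label_append_eq (hk.trans hq) hres β)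

end PTree

theorem statement11_general {C : Type u} (τs : ℕ → PTree C)
    (hmono : ∀ n : ℕ, PTree.LE (τs n) (τs (n + 1))) :
    ∃ τ : PTree C, (∀ n : ℕ, PTree.LE (τs n) τ) ∧
      ∀ τ' : PTree C, (∀ n : ℕ, PTree.LE (τs n) τ') → PTree.LE τ τ' := by
  have hτ : Monotone τs := monotone_nat_of_le_succ hmono
  exact ⟨PTree.lim hτ, PTree.le_lim hτ, fun _ => PTree.lim_le hτ⟩

/-- Proposition `tree-ord` (2): every increasing sequence of trees
(with respect to `⊑`) has a least upper bound. -/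
theorem statement11 {C : Type u} (S : BigStep C) (τs : ℕ → PTree C)
    (hmono : ∀ n : ℕ, PTree.LE (τs n) (τs (n + 1))) :
    ∃ τ : PTree C, (∀ n : ℕ, PTree.LE (τs n) τ) ∧
      ∀ τ' : PTree C, (∀ n : ℕ, PTree.LE (τs n) τ') → PTree.LE τ τ' :=
  statement11_general τs hmono

end BigStepMeta
end

section
/- Let (C, R, 𝓡) be a big-step semantics, 𝓡^? its partial-evaluation semantics, ⇝ the one-step reduction relation on finite proof trees in 𝓡^?, and ⊑ the order on such trees (with strict version ⊏). Then for all finite proof trees τ, τ' in 𝓡^?: (1) if τ ⇝ τ' then τ ⊏ τ'; (2) if τ ⊑ τ' then τ ⇝* τ' (reflexive-transitive closure). -/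
namespace BigStepMeta

universe u

variable {C : Type u}

/-! ## Indexed predicates and soundness conditions -/

variable {I : Type u}

/-!
A reduction step only replaces a `?` — by a result, or by a rule application with one more
rightmost premise — possibly inside the last child, so it strictly grows the tree.
Conversely, if `τ ⊑ τ'` then all children of the root of `τ` but the last are complete, hence
equal to their counterparts in `τ'`, and the last one reduces to its counterpart by induction.
The remaining children of `τ'` are then grown one at a time, each from a fresh `?`-leaf (which
lies below it, so induction applies again), and a final step fills in the root result.
-/

open List Relation

variable {S : BigStep C}

theorem FTreeLE.node_of_forall₂ {c : C} {u' : Option C} {l l₁ l₂ : List (FTree C)}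
    (h : Forall₂ FTreeLE l l₁) : FTreeLE (.node c none l) (.node c u' (l₁ ++ l₂)) :=
  .step h.length_eq fun _ hp => forall₂_zip h hp

theorem FTreeLE.refl : ∀ τ : FTree C, FTreeLE τ τ
  | .node _ (some _) _ => .done
  | .node _ none l => by
    simpa using FTreeLE.node_of_forall₂ (l₂ := [])
      (forall₂_same.mpr fun σ (_ : σ ∈ l) => FTreeLE.refl σ)
decreasing_by
  have := sizeOf_lt_of_mem ‹σ ∈ l›
  simp only [FTree.node.sizeOf_spec]
  omega

theorem FTreeLE.forall₂_refl (l : List (FTree C)) : Forall₂ FTreeLE l l :=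
  forall₂_same.mpr fun σ _ => FTreeLE.refl σ

theorem FTreeLE.node_append (c : C) (u' : Option C) (l l₂ : List (FTree C)) :
    FTreeLE (.node c none l) (.node c u' (l ++ l₂)) :=
  .node_of_forall₂ (FTreeLE.forall₂_refl l)

theorem FTreeLE.eq_of_judg_snd_ne_none {σ σ' : FTree C} (h : FTreeLE σ σ')
    (hσ : σ.judg.2 ≠ none) : σ = σ' := by
  cases h with
  | done => rfl
  | step => simp [FTree.judg] at hσ

theorem FTreeLE.leaf_le (σ : FTree C) : FTreeLE (.node σ.judg.1 none []) σ := by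
  obtain ⟨c, u, l⟩ := σ
  exact .node_append c u [] l

theorem Red.ftreeLE {τ τ' : FTree C} (h : Red S τ τ') : FTreeLE τ τ' := by
  induction h with
  | res => exact .node_append _ _ [] []
  | start => exact .node_of_forall₂ .nil
  | @complete _ _ _ l => simpa using FTreeLE.node_append _ (some _) l []
  | next => exact .node_append _ _ _ _
  | @inner _ l _ _ _ ih =>
    simpa using FTreeLE.node_of_forall₂ (l₂ := [])
      (rel_append (FTreeLE.forall₂_refl l) (.cons ih .nil))

theorem Red.ne {τ τ' : FTree C} (h : Red S τ τ') : τ ≠ τ' := by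
  induction h with
  | inner _ ih => simpa using ih
  | _ => simp

theorem Red.reflTransGen_inner {σ σ' : FTree C} (h : ReflTransGen (Red S) σ σ') (c : C)
    (l : List (FTree C)) :
    ReflTransGen (Red S) (.node c none (l ++ [σ])) (.node c none (l ++ [σ'])) :=
  h.lift (fun σ => FTree.node c none (l ++ [σ])) fun _ _ => Red.inner

theorem IsFPT.leaf (c : C) : IsFPT S (.node c none []) :=
  ⟨.unk_ax, by simp⟩

theorem URule.eq_nil_or_eq_append_of_unknown {c : C} {l : List (FTree C)}
    (h : URule S c none (l.map FTree.judg)) :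
    l = [] ∨ ∃ L a, l = L ++ [a] ∧ ∀ σ ∈ L, σ.judg.2 ≠ none := by
  generalize hl : l.map FTree.judg = prems at h
  have of_prefix : ∀ (pre : List (Judg C)) x,
      l.map FTree.judg = pre.map (fun j => (j.conf, some j.res)) ++ [x] →
      ∃ L a, l = L ++ [a] ∧ ∀ σ ∈ L, σ.judg.2 ≠ none := by
    intro pre x hmap
    obtain ⟨L, l', rfl, hL, hl'⟩ := map_eq_append_iff.mp hmap
    obtain ⟨a, rfl⟩ : ∃ a, l' = [a] :=
      length_eq_one_iff.mp (by simpa using congrArg length hl')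
    refine ⟨L, a, rfl, fun σ hσ => ?_⟩
    obtain ⟨j, -, hj⟩ := mem_map.mp (hL ▸ mem_map_of_mem hσ)
    simp [← hj]
  cases h with
  | unk_ax => exact .inl (by simpa using hl)
  | unk => exact .inr (of_prefix _ _ hl)
  | prop => exact .inr (of_prefix _ _ hl)

theorem FTreeLE.exists_eq_append_of_forall₂ {L l₁ : List (FTree C)} {a : FTree C}
    (h : Forall₂ FTreeLE (L ++ [a]) l₁) (hL : ∀ σ ∈ L, σ.judg.2 ≠ none) :
    ∃ b, l₁ = L ++ [b] ∧ FTreeLE a b := by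
  rcases eq_nil_or_concat' l₁ with rfl | ⟨L₁, b, rfl⟩
  · simpa using h.length_eq
  rw [← forall₂_reverse_iff, reverse_concat, reverse_concat, forall₂_cons,
    forall₂_reverse_iff] at h
  obtain ⟨hab, hLL₁⟩ := h
  suffices L = L₁ by exact ⟨b, by rw [this], hab⟩
  induction hLL₁ with
  | nil => rfl
  | cons hσ _ ih =>
    simp only [mem_cons, forall_eq_or_imp] at hL
    rw [hσ.eq_of_judg_snd_ne_none hL.1, ih hL.2]

theorem Red.append_leaf {ρ : Rule C} (hρ : ρ ∈ S.Rules) {pre rest : List (Judg C)}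
    {j : Judg C} (hprem : ρ.premises = pre ++ j :: rest) {A : List (FTree C)}
    (hA : A.map FTree.judg = pre.map (fun j => (j.conf, some j.res))) :
    Red S (.node ρ.concl none A) (.node ρ.concl none (A ++ [.node j.conf none []])) := by
  rcases eq_nil_or_concat' pre with rfl | ⟨pre', j', rfl⟩
  · obtain rfl : A = [] := by simpa using hA
    exact .start hρ hprem
  · exact .next (pre := pre') (j' := j') (rest := rest) hρ (by simp [hprem])
      (by simpa using hA)

theorem Red.append_leaf_of_map_judg {ρ : Rule C} (hρ : ρ ∈ S.Rules)
    {pre rest : List (Judg C)} {j : Judg C} (hprem : ρ.premises = pre ++ j :: rest)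
    {u : Option C} {A B : List (FTree C)} {σ : FTree C}
    (hm : (A ++ σ :: B).map FTree.judg =
      pre.map (fun j => (j.conf, some j.res)) ++ [(j.conf, u)]) :
    Red S (.node ρ.concl none A) (.node ρ.concl none (A ++ [.node σ.judg.1 none []])) := by
  rcases eq_nil_or_concat' B with rfl | ⟨B, b, rfl⟩
  · obtain ⟨hA, hσ⟩ : A.map FTree.judg = pre.map (fun j => (j.conf, some j.res)) ∧
        σ.judg = (j.conf, u) := by simpa using hm
    rw [hσ]
    exact .append_leaf hρ hprem hA
  · have hpre : pre.map (fun j => (j.conf, some j.res)) =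
        A.map FTree.judg ++ (σ :: B).map FTree.judg := by
      refine (append_inj' (t₁ := [b.judg]) (t₂ := [(j.conf, u)]) ?_ rfl).1.symm
      rw [← hm]
      simp
    obtain ⟨P, Q, rfl, hP, hQ⟩ := map_eq_append_iff.mp hpre
    obtain ⟨j₀, Q', rfl, hj₀, -⟩ := map_eq_cons_iff.mp hQ
    rw [← hj₀]
    exact .append_leaf (rest := Q' ++ j :: rest) hρ (by simp [hprem]) hP.symm

theorem Red.reflTransGen_of_append {ρ : Rule C} (hρ : ρ ∈ S.Rules)
    {pre rest : List (Judg C)} {j : Judg C} (hprem : ρ.premises = pre ++ j :: rest)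
    {u : Option C} {m : List (FTree C)}
    (hm : m.map FTree.judg = pre.map (fun j => (j.conf, some j.res)) ++ [(j.conf, u)])
    (grow : ∀ σ ∈ m, ReflTransGen (Red S) (.node σ.judg.1 none []) σ)
    (A B : List (FTree C)) (hAB : A ++ B = m) :
    ReflTransGen (Red S) (.node ρ.concl none A) (.node ρ.concl none m) := by
  induction B generalizing A with
  | nil => simp only [← hAB, append_nil, ReflTransGen.refl]
  | cons σ B ih =>
    subst hAB
    have hσ : σ ∈ A ++ σ :: B := by simp
    refine .head (Red.append_leaf_of_map_judg hρ hprem hm) ?_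
    exact (Red.reflTransGen_inner (grow σ hσ) _ A).trans (ih (A ++ [σ]) (by simp))

theorem URule.reflTransGen_red_of_append {c : C} {u : Option C} {m : List (FTree C)}
    (h : URule S c u (m.map FTree.judg))
    (grow : ∀ σ ∈ m, ReflTransGen (Red S) (.node σ.judg.1 none []) σ)
    (A B : List (FTree C)) (hAB : A ++ B = m) :
    ReflTransGen (Red S) (.node c none A) (.node c u m) := by
  generalize hm : m.map FTree.judg = prems at h
  cases h with
  | ax hr =>
    obtain rfl : m = [] := by simpa using hm
    obtain ⟨rfl, rfl⟩ := append_eq_nil_iff.mp hAB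
    exact .single (.res hr)
  | @rule ρ hρ =>
    obtain ⟨pre, jl, hsplit⟩ := (eq_nil_or_concat' ρ.premises).resolve_left ρ.ne
    have hlast : ρ.lastJ = jl := by simp [Rule.lastJ, hsplit]
    have hm' : m.map FTree.judg =
        pre.map (fun j => (j.conf, some j.res)) ++ [(jl.conf, some jl.res)] := by
      simp [hm, hsplit]
    rw [hlast]
    exact (Red.reflTransGen_of_append hρ hsplit hm' grow A B hAB).tail
      (.complete hρ hsplit hm')
  | unk_ax =>
    obtain rfl : m = [] := by simpa using hm
    obtain ⟨rfl, rfl⟩ := append_eq_nil_iff.mp hAB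
    exact .refl
  | unk hρ hsplit => exact Red.reflTransGen_of_append hρ hsplit hm grow A B hAB
  | prop hρ hsplit => exact Red.reflTransGen_of_append hρ hsplit hm grow A B hAB

theorem IsFPT.reflTransGen_red_of_ftreeLE {τ' : FTree C} (hτ' : IsFPT S τ') :
    ∀ τ, IsFPT S τ → FTreeLE τ τ' → ReflTransGen (Red S) τ τ' := by
  induction hτ' with
  | @mk c u' m hrule' _ ih =>
    intro τ hτ hle
    cases hle with
    | done => exact .refl
    | @step _ _ l l₁ l₂ hlen hzip =>
      have grow : ∀ σ ∈ l₁ ++ l₂, ReflTransGen (Red S) (.node σ.judg.1 none []) σ :=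
        fun σ hσ => ih σ hσ _ (.leaf _) (.leaf_le σ)
      suffices ReflTransGen (Red S) (.node c none l) (.node c none l₁) from
        this.trans (hrule'.reflTransGen_red_of_append grow l₁ l₂ rfl)
      have hll₁ : Forall₂ FTreeLE l l₁ :=
        forall₂_iff_zip.mpr ⟨hlen, fun hp => hzip _ hp⟩
      obtain ⟨hrule, hchildren⟩ := hτ
      rcases hrule.eq_nil_or_eq_append_of_unknown with rfl | ⟨L, a, rfl, hL⟩
      · obtain rfl := forall₂_nil_left_iff.mp hll₁
        exact .refl
      · obtain ⟨b, rfl, hab⟩ := FTreeLE.exists_eq_append_of_forall₂ hll₁ hL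
        exact Red.reflTransGen_inner (ih b (by simp) a (hchildren a (by simp)) hab) c L

theorem statement12_general {C : Type u} (S : BigStep C) (τ τ' : FTree C)
    (hτ : IsFPT S τ) (hτ' : IsFPT S τ') :
    (Red S τ τ' → FTreeLE τ τ' ∧ τ ≠ τ') ∧
    (FTreeLE τ τ' → Relation.ReflTransGen (Red S) τ τ') :=
  ⟨fun h => ⟨h.ftreeLE, h.ne⟩, hτ'.reflTransGen_red_of_ftreeLE τ hτ⟩

/-- Proposition `tree-ord-arrow`: for finite proof trees in `𝓡^?`,
(1) `τ ⇝ τ'` implies `τ ⊏ τ'`, and (2) `τ ⊑ τ'` implies `τ ⇝* τ'`. -/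
theorem statement12 {C : Type u} (S : BigStep C) (hBP : S.BP) (τ τ' : FTree C)
    (hτ : IsFPT S τ) (hτ' : IsFPT S τ') :
    (Red S τ τ' → FTreeLE τ τ' ∧ τ ≠ τ') ∧
    (FTreeLE τ τ' → Relation.ReflTransGen (Red S) τ τ') :=
  statement12_general S τ τ' hτ hτ'

end BigStepMeta
end

section
/- Let (C, R, 𝓡) be a big-step semantics satisfying the boundedness condition BP and 𝓡^? its partial-evaluation semantics. For each sequence (τ_n)_{n∈ℕ} of (possibly infinite) proof trees in 𝓡^? that is increasing with respect to the order ⊑, the least upper bound ⊔ τ_n is again a proof tree in 𝓡^?. -/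
namespace BigStepMeta

universe u

variable {C : Type u}

/-! ## Indexed predicates and soundness conditions -/

variable {I : Type u}

/-- Proposition `pt-seq` (1): for each `⊑`-increasing sequence of
(possibly infinite) proof trees in `𝓡^?`, the least upper bound is again a proof tree. -/
theorem statement13 {C : Type u} (S : BigStep C) (hBP : S.BP) (τs : ℕ → PTree C)
    (hpt : ∀ n : ℕ, (τs n).IsProofTree S)
    (hmono : ∀ n : ℕ, PTree.LE (τs n) (τs (n + 1)))
    (τ : PTree C)
    (hub : ∀ n : ℕ, PTree.LE (τs n) τ)
    (hlub : ∀ τ' : PTree C, (∀ n : ℕ, PTree.LE (τs n) τ') → PTree.LE τ τ') :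
    τ.IsProofTree S := by
  classical
  obtain ⟨b, hb⟩ := hBP
  -- basic facts
  have hrefl : ∀ τ' : PTree C, PTree.LE τ' τ' := by
    intro τ' α p h
    exact ⟨p, h, rfl, fun _ β => rfl⟩
  have htrans : ∀ τ1 τ2 τ3 : PTree C, PTree.LE τ1 τ2 → PTree.LE τ2 τ3 → PTree.LE τ1 τ3 := by
    intro τ1 τ2 τ3 h12 h23 α p h1
    obtain ⟨p2, h2, hc, hs⟩ := h12 α p h1
    obtain ⟨p3, h3, hc2, hs2⟩ := h23 α p2 h2
    refine ⟨p3, h3, hc.trans hc2, ?_⟩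
    intro hne β
    have hp2 : p2 = p := by
      have h0 := hs hne []
      simp only [List.append_nil] at h0
      rw [h1] at h0
      exact (Option.some_inj.mp (h0.trans h2)).symm
    have hne2 : p2.2 ≠ none := by rw [hp2]; exact hne
    exact (hs hne β).trans (hs2 hne2 β)
  have Lmono : ∀ m n : ℕ, m ≤ n → PTree.LE (τs m) (τs n) := by
    intro m n hmn
    induction n, hmn using Nat.le_induction with
    | base => exact hrefl _
    | succ n hn ih => exact htrans _ _ _ ih (hmono n)
  -- persistence and domain facts from hub
  have L2 : ∀ (n : ℕ) (α : List ℕ+) (c r : C), (τs n).label α = some (c, some r) →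
      ∀ β, (τs n).label (α ++ β) = τ.label (α ++ β) := by
    intro n α c r h β
    obtain ⟨p', h', hc, hs⟩ := hub n α _ h
    exact hs (by simp) β
  have Ldom : ∀ (n : ℕ) (γ : List ℕ+) (p : C × Option C), (τs n).label γ = some p →
      ∃ p', τ.label γ = some p' ∧ p.1 = p'.1 := by
    intro n γ p h
    obtain ⟨p', h', hc, _⟩ := hub n γ p h
    exact ⟨p', h', hc⟩
  have hDom : ∀ (n : ℕ) (γ : List ℕ+), τ.label γ = none → (τs n).label γ = none := by
    intro n γ h
    cases h' : (τs n).label γ with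
    | none => rfl
    | some q =>
      obtain ⟨p', hp', _⟩ := Ldom n γ q h'
      rw [h] at hp'; cases hp'
  -- the union upper bound
  obtain ⟨U, hU⟩ : ∃ U : PTree C, ∀ γ : List ℕ+,
      U.label γ = if ∃ n p, (τs n).label γ = some p then
        (τ.label γ).map (fun p =>
          (p.1, if ∃ n c r, (τs n).label γ = some (c, some r) then p.2 else none))
      else none := by
    refine ⟨⟨fun γ => if ∃ n p, (τs n).label γ = some p then
        (τ.label γ).map (fun p =>
          (p.1, if ∃ n c r, (τs n).label γ = some (c, some r) then p.2 else none))
      else none, ?_, ?_, ?_⟩, fun γ => rfl⟩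
    · -- root
      intro hcon
      have hex : ∃ n p, (τs n).label [] = some p := by
        cases h0 : (τs 0).label [] with
        | none => exact absurd h0 (τs 0).root_def
        | some p => exact ⟨0, p, h0⟩
      rw [if_pos hex] at hcon
      obtain ⟨n, p, hp⟩ := hex
      obtain ⟨p', hp', _⟩ := Ldom n [] p hp
      rw [hp'] at hcon
      simp at hcon
    · -- closed
      intro β n hcon hcon2
      have hex : ∃ m p, (τs m).label (β ++ [n]) = some p := by
        by_contra h'
        exact hcon (if_neg h')
      obtain ⟨m, p, hp⟩ := hex
      have h2 : (τs m).label β ≠ none :=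
        (τs m).closed β n (by rw [hp]; exact Option.some_ne_none _)
      obtain ⟨q, hq⟩ := Option.ne_none_iff_exists'.mp h2
      obtain ⟨p', hp', _⟩ := Ldom m β q hq
      rw [if_pos ⟨m, q, hq⟩, hp'] at hcon2
      simp at hcon2
    · -- siblings
      intro β n k hkn hcon hcon2
      have hex : ∃ m p, (τs m).label (β ++ [n]) = some p := by
        by_contra h'
        exact hcon (if_neg h')
      obtain ⟨m, p, hp⟩ := hex
      have h2 : (τs m).label (β ++ [k]) ≠ none :=
        (τs m).siblings β n k hkn (by rw [hp]; exact Option.some_ne_none _)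
      obtain ⟨q, hq⟩ := Option.ne_none_iff_exists'.mp h2
      obtain ⟨p', hp', _⟩ := Ldom m (β ++ [k]) q hq
      rw [if_pos ⟨m, q, hq⟩, hp'] at hcon2
      simp at hcon2
  -- key: where τs n agrees with τ, U also agrees with τ
  have hUeq : ∀ (n : ℕ) (γ : List ℕ+), (τs n).label γ = τ.label γ → U.label γ = τ.label γ := by
    intro n γ heq
    rw [hU]
    cases hq : (τs n).label γ with
    | none =>
      rw [hq] at heq
      rw [← heq]
      rw [if_neg]
      intro ⟨m, q, hm⟩
      obtain ⟨p', hp', _⟩ := Ldom m γ q hm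
      rw [← heq] at hp'; cases hp'
    | some q =>
      rw [hq] at heq
      rw [if_pos ⟨n, q, hq⟩, ← heq]
      obtain ⟨cq, uq⟩ := q
      simp only [Option.map_some]
      cases uq with
      | some r =>
        rw [if_pos ⟨n, cq, r, hq⟩]
      | none =>
        rw [if_neg]
        intro ⟨m, c', r', hm⟩
        have h2 := L2 m γ c' r' hm []
        simp only [List.append_nil] at h2
        rw [hm, ← heq] at h2
        cases h2
  have hUB : ∀ n : ℕ, PTree.LE (τs n) U := by
    intro n α p hp
    obtain ⟨p', hp', hcc⟩ := Ldom n α p hp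
    refine ⟨(p'.1, if ∃ n c r, (τs n).label α = some (c, some r) then p'.2 else none),
      ?_, hcc, ?_⟩
    · rw [hU, if_pos ⟨n, p, hp⟩, hp']
      rfl
    · intro hne β
      obtain ⟨cp, up⟩ := p
      cases up with
      | none => exact absurd rfl hne
      | some r =>
        have heq : ∀ β', (τs n).label (α ++ β') = τ.label (α ++ β') := L2 n α cp r hp
        rw [heq β, hUeq n (α ++ β) (heq β)]
  have hLEτU : PTree.LE τ U := hlub U hUB
  -- F1 : every node of τ appears in some τs m
  have F1 : ∀ (γ : List ℕ+) (p : C × Option C), τ.label γ = some p →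
      ∃ m q, (τs m).label γ = some q := by
    intro γ p h
    by_contra hcon
    obtain ⟨p', hp', _, _⟩ := hLEτU γ p h
    rw [hU, if_neg hcon] at hp'
    cases hp'
  -- F2 : results of τ appear in some τs m
  have F2 : ∀ (γ : List ℕ+) (c r : C), τ.label γ = some (c, some r) →
      ∃ m, (τs m).label γ = some (c, some r) := by
    intro γ c r h
    by_cases hin : ∃ m c' r', (τs m).label γ = some (c', some r')
    · obtain ⟨m, c', r', hm⟩ := hin
      have h2 : (τs m).label γ = τ.label γ := by
        simpa using L2 m γ c' r' hm []
      exact ⟨m, h2.trans h⟩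
    · exfalso
      obtain ⟨p', hp', _, hs⟩ := hLEτU γ _ h
      have hUc : U.label γ = some (c, some r) := by
        have h0 := hs (by simp) []
        simp only [List.append_nil] at h0
        rw [← h0, h]
      rw [hU] at hUc
      by_cases hout : ∃ n p, (τs n).label γ = some p
      · rw [if_pos hout, h] at hUc
        simp only [Option.map_some] at hUc
        rw [if_neg hin] at hUc
        simp at hUc
      · rw [if_neg hout] at hUc
        cases hUc
  -- bounded branching
  have hbr : ∀ (n : ℕ) (α : List ℕ+) (k : ℕ+), b < (k : ℕ) → (τs n).label (α ++ [k]) = none := by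
    intro n α k hk
    by_contra hne
    have hpar : (τs n).label α ≠ none := (τs n).closed α k hne
    obtain ⟨p, hp⟩ := Option.ne_none_iff_exists'.mp hpar
    obtain ⟨pc, pu⟩ := p
    obtain ⟨prems, hrule, hch⟩ := hpt n α (pc, pu) hp
    have hrule' : URule S pc pu prems := hrule
    have hlen : prems.length ≤ b := by
      cases hrule' with
      | ax _ => simp
      | rule hρ => simpa using hb _ hρ
      | unk_ax => simp
      | unk hρ heq _ =>
        have h1 := hb _ hρ
        rw [heq] at h1
        simp only [List.length_append, List.length_cons, List.length_map,
          List.length_nil] at h1 ⊢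
        omega
      | prop hρ heq =>
        have h1 := hb _ hρ
        rw [heq] at h1
        simp only [List.length_append, List.length_cons, List.length_map,
          List.length_nil] at h1 ⊢
        omega
    have hnone : prems[(k : ℕ) - 1]? = none := by
      rw [List.getElem?_eq_none_iff]
      omega
    exact hne ((hch k).trans hnone)
  have hbrτ : ∀ (α : List ℕ+) (k : ℕ+), b < (k : ℕ) → τ.label (α ++ [k]) = none := by
    intro α k hk
    cases h : τ.label (α ++ [k]) with
    | none => rfl
    | some p =>
      obtain ⟨m, q, hm⟩ := F1 _ _ h
      rw [hbr m α k hk] at hm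
      cases hm
  -- stabilization at every address
  have hstab : ∀ γ : List ℕ+, ∃ m : ℕ, ∀ n : ℕ, m ≤ n → (τs n).label γ = τ.label γ := by
    intro γ
    cases h : τ.label γ with
    | none => exact ⟨0, fun n _ => hDom n γ h⟩
    | some q =>
      obtain ⟨cq, uq⟩ := q
      cases uq with
      | some r =>
        obtain ⟨m, hm⟩ := F2 γ cq r h
        refine ⟨m, fun n hn => ?_⟩
        obtain ⟨q', hq', _, hs⟩ := Lmono m n hn γ _ hm
        have he : (τs m).label γ = (τs n).label γ := by
          simpa using hs (by simp) []
        rw [← he, hm]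
      | none =>
        obtain ⟨m, q0, hm⟩ := F1 γ _ h
        refine ⟨m, fun n hn => ?_⟩
        obtain ⟨⟨c2, u2⟩, hq', _, _⟩ := Lmono m n hn γ _ hm
        obtain ⟨p2, hp2, hc2⟩ := Ldom n γ _ hq'
        have hp2e : p2 = (cq, none) := Option.some_inj.mp (hp2.symm.trans h)
        cases u2 with
        | none =>
          rw [hq']
          rw [hp2e] at hc2
          simp only at hc2
          rw [hc2]
        | some r2 =>
          exfalso
          have h2 := L2 n γ c2 r2 hq' []
          simp only [List.append_nil] at h2
          rw [hq', h] at h2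
          cases h2
  -- main argument
  intro α p hp
  obtain ⟨c, u⟩ := p
  cases u with
  | some r =>
    obtain ⟨m, hm⟩ := F2 α c r hp
    obtain ⟨prems, hrule, hch⟩ := hpt m α _ hm
    refine ⟨prems, hrule, fun k => ?_⟩
    rw [← L2 m α c r hm [k]]
    exact hch k
  | none =>
    -- choose a stabilization bound for the root and all (≤ b) children
    set f : ℕ+ → ℕ := fun k => (hstab (α ++ [k])).choose with hf
    set m0 : ℕ := (hstab α).choose with hm0
    set N : ℕ := max m0 ((Finset.range b).sup (fun i => f ⟨i + 1, Nat.succ_pos i⟩)) with hN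
    have hrootN : (τs N).label α = some (c, none) := by
      rw [(hstab α).choose_spec N (le_max_left _ _), hp]
    have hchild : ∀ k : ℕ+, (τs N).label (α ++ [k]) = τ.label (α ++ [k]) := by
      intro k
      by_cases hk : b < (k : ℕ)
      · rw [hbr N α k hk, hbrτ α k hk]
      · push_neg at hk
        have hkpos := k.pos
        have hkeq : (⟨(k : ℕ) - 1 + 1, Nat.succ_pos _⟩ : ℕ+) = k := by
          apply Subtype.ext
          show (k : ℕ) - 1 + 1 = (k : ℕ)
          omega
        have hle : f k ≤ N := by
          calc f k = f ⟨(k : ℕ) - 1 + 1, Nat.succ_pos _⟩ := by rw [hkeq]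
          _ ≤ (Finset.range b).sup (fun i => f ⟨i + 1, Nat.succ_pos i⟩) :=
              Finset.le_sup (f := fun i => f ⟨i + 1, Nat.succ_pos i⟩)
                (b := (k : ℕ) - 1) (Finset.mem_range.mpr (by omega))
          _ ≤ N := le_max_right _ _
        exact (hstab (α ++ [k])).choose_spec N hle
    obtain ⟨prems, hrule, hch⟩ := hpt N α (c, none) hrootN
    refine ⟨prems, hrule, fun k => ?_⟩
    rw [← hchild k]
    exact hch k

end BigStepMeta
end

section
/- Let (C, R, 𝓡) be a big-step semantics and 𝓡^? its partial-evaluation semantics. For each well-formed infinite proof tree τ in 𝓡^?, there is a sequence (τ_n)_{n∈ℕ} of finite proof trees in 𝓡^?, strictly increasing with respect to the order ⊑, such that τ = ⊔ τ_n. -/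
namespace BigStepMeta

universe u

variable {C : Type u}

/-! ## Indexed predicates and soundness conditions -/

variable {I : Type u}

/-!
Cut `τ` at depth `n`, except that a complete judgment at depth `n` keeps its whole subtree:
below depth `n` only such subtrees survive. A cut node `c ⇒ ?` becomes the axiom `c ⇒ ?`, so
each truncation is a proof tree, and it is finite because `𝓡^?` is finitely branching and
complete subtrees of a well-formed tree are finite. Truncations only grow with `n`, they grow
strictly because every level of `τ` carries a `?` node, and every node of `τ` already appears
(with its complete subtree) in the truncation at its own depth, which makes `τ` their supremum.
-/

namespace PTree

variable {S : BigStep C} {τ : PTree C} {α : List ℕ+} {n : ℕ}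

def IsCompleteAt (τ : PTree C) (α : List ℕ+) : Prop :=
  ∃ c r, τ.label α = some (c, some r)

lemma label_append_eq_none (h : τ.label α = none) (β : List ℕ+) :
    τ.label (α ++ β) = none := by
  induction β generalizing α with
  | nil => simpa using h
  | cons m β ih =>
    have hm : τ.label (α ++ [m]) = none := by
      by_contra hm
      exact τ.closed α m hm h
    simpa using ih hm

lemma IsProofTree.finite_children (hpt : τ.IsProofTree S) (α : List ℕ+) :
    {m : ℕ+ | τ.label (α ++ [m]) ≠ none}.Finite := by
  rcases hα : τ.label α with _ | p
  · simp [label_append_eq_none hα]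
  obtain ⟨prems, -, hch⟩ := hpt α p hα
  refine (Set.finite_Iic prems.length.succPNat).subset fun m hm => ?_
  rw [Set.mem_ofPred_eq, hch m, Ne, List.getElem?_eq_none_iff, not_le] at hm
  rw [Set.mem_Iic, ← PNat.coe_le_coe, Nat.succPNat_coe]
  omega

lemma IsProofTree.finite_length_le (hpt : τ.IsProofTree S) (n : ℕ) :
    {α : List ℕ+ | τ.label α ≠ none ∧ α.length ≤ n}.Finite := by
  induction n with
  | zero => exact (Set.finite_singleton []).subset fun α hα => by simpa using hα.2
  | succ n ih =>
    refine ((Set.finite_singleton []).union (ih.biUnion fun β _ =>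
      (hpt.finite_children β).image (β ++ [·]))).subset ?_
    rintro α ⟨hα, hlen⟩
    rcases List.eq_nil_or_concat α with rfl | ⟨β, m, rfl⟩
    · exact Or.inl rfl
    rw [List.concat_eq_append] at hα hlen ⊢
    refine Or.inr (Set.mem_biUnion (x := β) ⟨τ.closed β m hα, ?_⟩ ⟨m, hα, rfl⟩)
    simp only [List.length_append, List.length_singleton] at hlen
    omega

lemma IsProofTree.isCompleteAt_append_singleton (hpt : τ.IsProofTree S)
    (hα : τ.IsCompleteAt α) {m : ℕ+} (hm : τ.label (α ++ [m]) ≠ none) :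
    τ.IsCompleteAt (α ++ [m]) := by
  obtain ⟨c, r, hl⟩ := hα
  obtain ⟨prems, hrule, hch⟩ := hpt α _ hl
  replace hrule : URule S c (some r) prems := hrule
  obtain ⟨p, hp⟩ := Option.ne_none_iff_exists'.mp hm
  rw [hch m] at hp
  cases hrule with
  | ax => simp at hp
  | rule =>
    obtain ⟨j, -, rfl⟩ := List.mem_map.mp (List.mem_of_getElem? hp)
    exact ⟨_, _, (hch m).trans hp⟩

lemma IsProofTree.isCompleteAt_append (hpt : τ.IsProofTree S) (hα : τ.IsCompleteAt α)
    {β : List ℕ+} (hβ : τ.label (α ++ β) ≠ none) : τ.IsCompleteAt (α ++ β) := by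
  induction β generalizing α with
  | nil => simpa using hα
  | cons m β ih =>
    rw [← List.singleton_append, ← List.append_assoc] at hβ ⊢
    have hm : τ.label (α ++ [m]) ≠ none := fun h => hβ (label_append_eq_none h β)
    exact ih (hpt.isCompleteAt_append_singleton hα hm) hβ

/-- The addresses surviving in the depth-`n` truncation `τ.trunc n`. -/
def IsKept (τ : PTree C) (n : ℕ) (α : List ℕ+) : Prop :=
  ∀ k, n ≤ k → k < α.length → τ.IsCompleteAt (α.take k)

lemma isKept_of_length_le (h : α.length ≤ n) : τ.IsKept n α :=
  fun _ hk hkα => absurd (hk.trans_lt hkα) h.not_gt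

lemma isKept_append_singleton {m : ℕ+} :
    τ.IsKept n (α ++ [m]) ↔ τ.IsKept n α ∧ (n ≤ α.length → τ.IsCompleteAt α) := by
  simp only [IsKept, List.length_append, List.length_singleton, Nat.lt_succ_iff_lt_or_eq]
  constructor
  · intro h
    refine ⟨fun k hk hkα => ?_, fun hn => ?_⟩
    · simpa [List.take_append_of_le_length hkα.le] using h k hk (Or.inl hkα)
    · simpa using h α.length hn (Or.inr rfl)
  · rintro ⟨h, hα⟩ k hk (hkα | rfl)
    · simpa [List.take_append_of_le_length hkα.le] using h k hk hkα
    · simpa using hα hk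

lemma IsKept.mono {m : ℕ} (hα : τ.IsKept m α) (hmn : m ≤ n) : τ.IsKept n α :=
  fun k hk => hα k (hmn.trans hk)

open Classical in
noncomputable def trunc (τ : PTree C) (n : ℕ) : PTree C where
  label α := if τ.IsKept n α then τ.label α else none
  root_def := by
    rw [if_pos (isKept_of_length_le (τ := τ) (α := []) (Nat.zero_le n))]
    exact τ.root_def
  closed α m h := by
    split_ifs at h with hk
    · rw [if_pos (isKept_append_singleton.mp hk).1]
      exact τ.closed α m h
    · exact absurd rfl h
  siblings α m k hkm h := by
    split_ifs at h with hk
    · rw [if_pos (isKept_append_singleton.mpr (isKept_append_singleton.mp hk))]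
      exact τ.siblings α m k hkm h
    · exact absurd rfl h

lemma trunc_label_of_isKept (h : τ.IsKept n α) : (τ.trunc n).label α = τ.label α :=
  if_pos h

lemma trunc_label_of_not_isKept (h : ¬ τ.IsKept n α) : (τ.trunc n).label α = none :=
  if_neg h

lemma trunc_label_of_eq_none (h : τ.label α = none) : (τ.trunc n).label α = none := by
  by_cases hk : τ.IsKept n α
  · rw [trunc_label_of_isKept hk, h]
  · exact trunc_label_of_not_isKept hk

lemma isKept_of_trunc_label_ne_none (h : (τ.trunc n).label α ≠ none) : τ.IsKept n α := by
  by_contra hk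
  exact h (trunc_label_of_not_isKept hk)

lemma isKept_of_trunc_label_eq_some {p : C × Option C} (h : (τ.trunc n).label α = some p) :
    τ.IsKept n α :=
  isKept_of_trunc_label_ne_none (by simp [h])

lemma IsProofTree.trunc_label_append (hpt : τ.IsProofTree S) (hk : τ.IsKept n α)
    (hα : τ.IsCompleteAt α) (β : List ℕ+) :
    (τ.trunc n).label (α ++ β) = τ.label (α ++ β) := by
  induction β generalizing α with
  | nil => simpa using trunc_label_of_isKept hk
  | cons m β ih =>
    rw [← List.singleton_append, ← List.append_assoc]
    by_cases hm : τ.label (α ++ [m]) = none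
    · rw [label_append_eq_none hm, trunc_label_of_eq_none (label_append_eq_none hm β)]
    · exact ih (isKept_append_singleton.mpr ⟨hk, fun _ => hα⟩)
        (hpt.isCompleteAt_append_singleton hα hm)

lemma IsProofTree.trunc (hpt : τ.IsProofTree S) (n : ℕ) : (τ.trunc n).IsProofTree S := by
  intro α p hp
  have hk := isKept_of_trunc_label_eq_some hp
  rw [trunc_label_of_isKept hk] at hp
  obtain ⟨prems, hrule, hch⟩ := hpt α p hp
  by_cases hgrow : n ≤ α.length → τ.IsCompleteAt α
  · exact ⟨prems, hrule, fun m => by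
      rw [trunc_label_of_isKept (isKept_append_singleton.mpr ⟨hk, hgrow⟩), hch m]⟩
  · obtain ⟨c, _ | r⟩ := p
    · exact ⟨[], URule.unk_ax, fun m => by
        rw [trunc_label_of_not_isKept fun h => hgrow (isKept_append_singleton.mp h).2]; simp⟩
    · exact absurd (fun _ => ⟨c, r, hp⟩) hgrow

lemma IsProofTree.trunc_finite (hpt : τ.IsProofTree S)
    (hfin : ∀ (α : List ℕ+) (c r : C), τ.label α = some (c, some r) →
      {β : List ℕ+ | τ.label (α ++ β) ≠ none}.Finite) (n : ℕ) :
    (τ.trunc n).Finite := by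
  have hcut : {β : List ℕ+ | τ.IsCompleteAt β ∧ β.length ≤ n}.Finite :=
    (hpt.finite_length_le n).subset fun β ⟨⟨c, r, h⟩, hβ⟩ => ⟨by simp [h], hβ⟩
  have hsub : {α | (τ.trunc n).label α ≠ none} ⊆
      {α | τ.label α ≠ none ∧ α.length ≤ n} ∪
        ⋃ β ∈ {β | τ.IsCompleteAt β ∧ β.length ≤ n},
          (β ++ ·) '' {γ | τ.label (β ++ γ) ≠ none} := by
    intro α hα
    have hk := isKept_of_trunc_label_ne_none hα
    rw [Set.mem_ofPred_eq, trunc_label_of_isKept hk] at hα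
    by_cases hlen : α.length ≤ n
    · exact Or.inl ⟨hα, hlen⟩
    refine Or.inr (Set.mem_biUnion (x := α.take n) ⟨hk n le_rfl (by omega), by simp⟩ ?_)
    exact ⟨α.drop n, by simpa using hα, List.take_append_drop n α⟩
  refine ((hpt.finite_length_le n).union (hcut.biUnion fun β hβ => ?_)).subset hsub
  obtain ⟨⟨c, r, h⟩, -⟩ := hβ
  exact (hfin β c r h).image _

lemma IsProofTree.trunc_le_trunc (hpt : τ.IsProofTree S) {m : ℕ} (hmn : m ≤ n) :
    (τ.trunc m).LE (τ.trunc n) := by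
  intro α p hp
  have hk := isKept_of_trunc_label_eq_some hp
  rw [trunc_label_of_isKept hk] at hp
  refine ⟨p, (trunc_label_of_isKept (hk.mono hmn)).trans hp, rfl, fun hu β => ?_⟩
  obtain ⟨c, _ | r⟩ := p
  · exact absurd rfl hu
  · rw [hpt.trunc_label_append hk ⟨c, r, hp⟩,
      hpt.trunc_label_append (hk.mono hmn) ⟨c, r, hp⟩]

lemma IsProofTree.trunc_le (hpt : τ.IsProofTree S) (n : ℕ) : (τ.trunc n).LE τ := by
  intro α p hp
  have hk := isKept_of_trunc_label_eq_some hp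
  rw [trunc_label_of_isKept hk] at hp
  refine ⟨p, hp, rfl, fun hu β => ?_⟩
  obtain ⟨c, _ | r⟩ := p
  · exact absurd rfl hu
  · exact hpt.trunc_label_append hk ⟨c, r, hp⟩ β

lemma IsProofTree.trunc_ne_trunc_succ (hpt : τ.IsProofTree S) {c : C}
    (hlen : α.length = n + 1) (hα : τ.label α = some (c, none)) :
    τ.trunc n ≠ τ.trunc (n + 1) := by
  have hcut : ¬ τ.IsKept n α := fun hk => by
    obtain ⟨c', r, h⟩ := hpt.isCompleteAt_append (hk n le_rfl (by omega)) (β := α.drop n)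
      (by simp [hα])
    simp [hα] at h
  intro heq
  have h := congrFun (congrArg PTree.label heq) α
  rw [trunc_label_of_not_isKept hcut, trunc_label_of_isKept (isKept_of_length_le hlen.le),
    hα] at h
  exact nomatch h

lemma IsProofTree.le_of_forall_trunc_le (hpt : τ.IsProofTree S) {τ' : PTree C}
    (h : ∀ n, (τ.trunc n).LE τ') : τ.LE τ' := by
  intro α p hp
  have hk : τ.IsKept α.length α := isKept_of_length_le le_rfl
  obtain ⟨p', hp', hconf, hsub⟩ := h α.length α p ((trunc_label_of_isKept hk).trans hp)
  refine ⟨p', hp', hconf, fun hu β => ?_⟩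
  obtain ⟨c, _ | r⟩ := p
  · exact absurd rfl hu
  · rw [← hsub hu β, hpt.trunc_label_append hk ⟨c, r, hp⟩]

end PTree

theorem statement15_general {C : Type u} (S : BigStep C) (τ : PTree C)
    (hpt : τ.IsProofTree S) (hwf : τ.WellFormed) :
    ∃ τs : ℕ → PTree C,
      (∀ n : ℕ, (τs n).Finite ∧ (τs n).IsProofTree S) ∧
      (∀ n : ℕ, PTree.LE (τs n) (τs (n + 1)) ∧ τs n ≠ τs (n + 1)) ∧
      (∀ n : ℕ, PTree.LE (τs n) τ) ∧
      (∀ τ' : PTree C, (∀ n : ℕ, PTree.LE (τs n) τ') → PTree.LE τ τ') := by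
  refine ⟨τ.trunc, fun n => ⟨hpt.trunc_finite hwf.2 n, hpt.trunc n⟩,
    fun n => ⟨hpt.trunc_le_trunc n.le_succ, ?_⟩, hpt.trunc_le,
    fun _ => hpt.le_of_forall_trunc_le⟩
  obtain ⟨α, c, hlen, hα⟩ := hwf.1 (n + 1)
  exact hpt.trunc_ne_trunc_succ hlen hα

/-- Proposition `pt-seq` (3): every well-formed infinite proof tree
in `𝓡^?` is the least upper bound of a strictly `⊑`-increasing sequence of finite
proof trees. -/
theorem statement15 {C : Type u} (S : BigStep C) (τ : PTree C)
    (hpt : τ.IsProofTree S) (hinf : ¬ τ.Finite) (hwf : τ.WellFormed) :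
    ∃ τs : ℕ → PTree C,
      (∀ n : ℕ, (τs n).Finite ∧ (τs n).IsProofTree S) ∧
      (∀ n : ℕ, PTree.LE (τs n) (τs (n + 1)) ∧ τs n ≠ τs (n + 1)) ∧
      (∀ n : ℕ, PTree.LE (τs n) τ) ∧
      (∀ τ' : PTree C, (∀ n : ℕ, PTree.LE (τs n) τ') → PTree.LE τ τ') :=
  statement15_general S τ hpt hwf

end BigStepMeta
end

section
/- Let (C, R, 𝓡) be a big-step semantics, 𝓡^? its partial-evaluation semantics and ⇝ the one-step reduction relation on finite proof trees in 𝓡^?. Then ⊢_𝓡 c ⇒ r holds if and only if the single-node tree with root c ⇒ ? reduces in finitely many ⇝-steps to a tree τ whose root is c ⇒ r. -/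
namespace BigStepMeta

universe u

variable {C : Type u}

/-! ## Indexed predicates and soundness conditions -/

variable {I : Type u}

/-!
Soundness: in every tree reachable from `c ⇒ ?`, each node labelled `c' ⇒ r'` is derivable,
since the only step producing a known result from `?` is the completion of a rule of `𝓡`
whose premises are already labelled by known, hence derivable, results.
Completeness: by induction on the derivation, the premises of the last rule are evaluated one
after another, each in the last child slot, where `Red.inner` lets it reduce undisturbed.
-/

section

variable {S : BigStep C}

def Evaluates (S : BigStep C) (c r : C) : Prop :=
  ∃ τ : FTree C, Relation.ReflTransGen (Red S) (.node c none []) τ ∧ τ.judg = (c, some r)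

lemma Rule.lastJ_eq_of_premises_eq {ρ : Rule C} {pre : List (Judg C)} {j : Judg C}
    (h : ρ.premises = pre ++ [j]) : ρ.lastJ = j := by
  simp only [Rule.lastJ, List.getLast_congr ρ.ne (by simp) h, List.getLast_append_singleton]

lemma Red.reflTransGen_lastChild {c : C} {l : List (FTree C)} {σ σ' : FTree C}
    (h : Relation.ReflTransGen (Red S) σ σ') :
    Relation.ReflTransGen (Red S) (.node c none (l ++ [σ])) (.node c none (l ++ [σ'])) :=
  h.lift (fun σ => FTree.node c none (l ++ [σ])) fun _ _ => Red.inner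

lemma evaluates_of_prefix_evaluated {ρ : Rule C} (hρ : ρ ∈ S.Rules)
    (hprem : ∀ j ∈ ρ.premises, Evaluates S j.conf j.res) (rest : List (Judg C)) :
    ∀ (pre : List (Judg C)) (j : Judg C) (l : List (FTree C)),
      ρ.premises = pre ++ j :: rest →
      l.map FTree.judg = pre.map (fun j => (j.conf, some j.res)) →
      ∃ τ : FTree C,
        Relation.ReflTransGen (Red S) (.node ρ.concl none (l ++ [.node j.conf none []])) τ ∧
          τ.judg = (ρ.concl, some ρ.lastJ.res) := by
  induction rest with
  | nil =>
    intro pre j l hsplit hl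
    obtain ⟨τj, hτj, hjudg⟩ := hprem j (by simp [hsplit])
    refine ⟨.node ρ.concl (some j.res) (l ++ [τj]), ?_, ?_⟩
    · exact (Red.reflTransGen_lastChild hτj).tail (Red.complete hρ hsplit (by simp [hl, hjudg]))
    · simp [FTree.judg, Rule.lastJ_eq_of_premises_eq hsplit]
  | cons j' rest ih =>
    intro pre j l hsplit hl
    obtain ⟨τj, hτj, hjudg⟩ := hprem j (by simp [hsplit])
    have hnext : Red S (.node ρ.concl none (l ++ [τj]))
        (.node ρ.concl none ((l ++ [τj]) ++ [.node j'.conf none []])) :=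
      Red.next hρ hsplit (by simp [hl, hjudg])
    obtain ⟨τ, hτ, hroot⟩ := ih (pre ++ [j]) j' (l ++ [τj]) (by simp [hsplit]) (by simp [hl, hjudg])
    exact ⟨τ, ((Red.reflTransGen_lastChild hτj).tail hnext).trans hτ, hroot⟩

lemma Evaluates.of_rule {ρ : Rule C} (hρ : ρ ∈ S.Rules)
    (hprem : ∀ j ∈ ρ.premises, Evaluates S j.conf j.res) :
    Evaluates S ρ.concl ρ.lastJ.res := by
  obtain ⟨j, rest, hsplit⟩ := List.exists_cons_of_ne_nil ρ.ne
  obtain ⟨τ, hτ, hroot⟩ :=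
    evaluates_of_prefix_evaluated hρ hprem rest [] j [] hsplit (by simp)
  exact ⟨τ, .head (Red.start hρ hsplit) hτ, hroot⟩

lemma Derives.evaluates {c r : C} (h : Derives S c r) : Evaluates S c r := by
  induction h with
  | ax hr => exact ⟨_, .single (Red.res hr), rfl⟩
  | rule hρ _ ih => exact Evaluates.of_rule hρ ih

inductive FTree.Sound (S : BigStep C) : FTree C → Prop
  | node {c : C} {u : Option C} {l : List (FTree C)} :
      (∀ r : C, u = some r → Derives S c r) → (∀ τ ∈ l, FTree.Sound S τ) →
      FTree.Sound S (.node c u l)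

lemma FTree.Sound.derives {τ : FTree C} (h : τ.Sound S) {c r : C}
    (hroot : τ.judg = (c, some r)) : Derives S c r := by
  obtain ⟨hderiv, -⟩ := h
  simp only [FTree.judg, Prod.mk.injEq] at hroot
  exact hroot.1 ▸ hderiv r hroot.2

lemma FTree.Sound.unknown {c : C} {l : List (FTree C)} (hl : ∀ τ ∈ l, τ.Sound S) :
    (FTree.node c none l).Sound S :=
  .node (fun _ h => nomatch h) hl

lemma FTree.Sound.unknown_append {c : C} {l : List (FTree C)} {σ : FTree C}
    (hl : ∀ τ ∈ l, τ.Sound S) (hσ : σ.Sound S) : (FTree.node c none (l ++ [σ])).Sound S :=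
  .unknown fun τ hτ => (List.mem_append.mp hτ).elim (hl τ) fun h => List.mem_singleton.mp h ▸ hσ

lemma Red.sound {τ τ' : FTree C} (h : Red S τ τ') (hτ : τ.Sound S) : τ'.Sound S := by
  induction h with
  | res hr => exact .node (fun _ h => Option.some_inj.mp h ▸ Derives.ax hr) (by simp)
  | start => exact .unknown_append (l := []) (by simp) (.unknown (by simp))
  | @complete ρ pre j l hρ hsplit hl =>
    obtain ⟨-, hchildren⟩ := hτ
    have hjudgs : l.map FTree.judg = ρ.premises.map (fun j => (j.conf, some j.res)) := by
      simp [hl, hsplit]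
    have hpremises : ∀ j' ∈ ρ.premises, Derives S j'.conf j'.res := by
      intro j' hj'
      have hmem : (j'.conf, some j'.res) ∈ l.map FTree.judg := hjudgs ▸ List.mem_map_of_mem hj'
      obtain ⟨σ, hσ, hroot⟩ := List.mem_map.mp hmem
      exact (hchildren σ hσ).derives hroot
    refine .node (fun r h => ?_) hchildren
    rw [← Option.some_inj.mp h, ← Rule.lastJ_eq_of_premises_eq hsplit]
    exact Derives.rule hρ hpremises
  | next =>
    obtain ⟨-, hchildren⟩ := hτ
    exact .unknown_append hchildren (.unknown (by simp))
  | inner _ ih =>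
    obtain ⟨-, hchildren⟩ := hτ
    exact .unknown_append (fun σ hσ => hchildren σ (by simp [hσ]))
      (ih (hchildren _ (by simp)))

lemma Evaluates.derives {c r : C} (h : Evaluates S c r) : Derives S c r := by
  obtain ⟨τ, hτ, hroot⟩ := h
  have hsound : τ.Sound S := by
    clear hroot
    induction hτ with
    | refl => exact .unknown (by simp)
    | tail _ hstep ih => exact hstep.sound ih
  exact hsound.derives hroot

end

theorem statement16_general {C : Type u} (S : BigStep C) (c r : C) :
    Derives S c r ↔
      ∃ τ : FTree C, Relation.ReflTransGen (Red S) (FTree.node c none []) τ ∧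
        τ.judg = (c, some r) :=
  ⟨Derives.evaluates, Evaluates.derives⟩

/-- Theorem `eq-finite_2`: `⊢_𝓡 c ⇒ r` iff the single-node tree
with root `c ⇒ ?` reduces in finitely many `⇝`-steps to a tree whose root is `c ⇒ r`. -/
theorem statement16 {C : Type u} (S : BigStep C) (hBP : S.BP) (c r : C) :
    Derives S c r ↔
      ∃ τ : FTree C, Relation.ReflTransGen (Red S) (FTree.node c none []) τ ∧
        τ.judg = (c, some r) :=
  statement16_general S c r

end BigStepMeta
end
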